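/- arXiv:2309.05215 — 2 statements merged into one kernel-verified Lean document; each statement's English description precedes it below -/
import Mathlib

section
/- At every nondegenerate u ∈ ℝ³ the area A_ijk is differentiable in u_i with ∂A_ijk/∂u_i (u) = (1/2) l_ij(u) h_ij^k(u) + (1/2) l_ki(u) h_ik^j(u). -/
open Real Filter Topology

/-- Edge length of a decorated edge with inversive distance `I`, base radii `ra, rb`
and conformal factors `x, y`. -/
noncomputable def elen (I ra rb x y : ℝ) : ℝ :=
  Real.sqrt ((Real.exp x * ra) ^ 2 + (Real.exp y * rb) ^ 2 +
    2 * I * (Real.exp x * ra) * (Real.exp y * rb))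

/-- Inner angle of a Euclidean triangle opposite the side `lc`, adjacent to `la, lb`. -/
noncomputable def ang (la lb lc : ℝ) : ℝ :=
  Real.arccos ((la ^ 2 + lb ^ 2 - lc ^ 2) / (2 * la * lb))

/-- Signed distance of the edge center to the vertex with scaled radius `ra`. -/
noncomputable def dCen (I ra rb l : ℝ) : ℝ := (ra ^ 2 + I * ra * rb) / l

/-- Signed height `(d_ac - d_ab * cos th) / sin th`. -/
noncomputable def hgt (dac dab th : ℝ) : ℝ := (dac - dab * Real.cos th) / Real.sin th

/-- Strict triangle inequalities for three side lengths. -/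
def Nondeg (a b c : ℝ) : Prop := a < b + c ∧ b < c + a ∧ c < a + b

noncomputable def Lij (ri rj rk Iij Ijk Iki ui uj uk : ℝ) : ℝ := elen Iij ri rj ui uj
noncomputable def Ljk (ri rj rk Iij Ijk Iki ui uj uk : ℝ) : ℝ := elen Ijk rj rk uj uk
noncomputable def Lki (ri rj rk Iij Ijk Iki ui uj uk : ℝ) : ℝ := elen Iki rk ri uk ui

/-- Inner angle `θ_jk^i` at vertex `i`. -/
noncomputable def ThI (ri rj rk Iij Ijk Iki ui uj uk : ℝ) : ℝ :=
  ang (Lij ri rj rk Iij Ijk Iki ui uj uk) (Lki ri rj rk Iij Ijk Iki ui uj uk)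
    (Ljk ri rj rk Iij Ijk Iki ui uj uk)

/-- Inner angle `θ_ki^j` at vertex `j`. -/
noncomputable def ThJ (ri rj rk Iij Ijk Iki ui uj uk : ℝ) : ℝ :=
  ang (Lij ri rj rk Iij Ijk Iki ui uj uk) (Ljk ri rj rk Iij Ijk Iki ui uj uk)
    (Lki ri rj rk Iij Ijk Iki ui uj uk)

/-- Inner angle `θ_ij^k` at vertex `k`. -/
noncomputable def ThK (ri rj rk Iij Ijk Iki ui uj uk : ℝ) : ℝ :=
  ang (Ljk ri rj rk Iij Ijk Iki ui uj uk) (Lki ri rj rk Iij Ijk Iki ui uj uk)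
    (Lij ri rj rk Iij Ijk Iki ui uj uk)

noncomputable def Dij (ri rj rk Iij Ijk Iki ui uj uk : ℝ) : ℝ :=
  dCen Iij (Real.exp ui * ri) (Real.exp uj * rj) (Lij ri rj rk Iij Ijk Iki ui uj uk)
noncomputable def Dji (ri rj rk Iij Ijk Iki ui uj uk : ℝ) : ℝ :=
  dCen Iij (Real.exp uj * rj) (Real.exp ui * ri) (Lij ri rj rk Iij Ijk Iki ui uj uk)
noncomputable def Djk (ri rj rk Iij Ijk Iki ui uj uk : ℝ) : ℝ :=
  dCen Ijk (Real.exp uj * rj) (Real.exp uk * rk) (Ljk ri rj rk Iij Ijk Iki ui uj uk)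
noncomputable def Dkj (ri rj rk Iij Ijk Iki ui uj uk : ℝ) : ℝ :=
  dCen Ijk (Real.exp uk * rk) (Real.exp uj * rj) (Ljk ri rj rk Iij Ijk Iki ui uj uk)
noncomputable def Dki (ri rj rk Iij Ijk Iki ui uj uk : ℝ) : ℝ :=
  dCen Iki (Real.exp uk * rk) (Real.exp ui * ri) (Lki ri rj rk Iij Ijk Iki ui uj uk)
noncomputable def Dik (ri rj rk Iij Ijk Iki ui uj uk : ℝ) : ℝ :=
  dCen Iki (Real.exp ui * ri) (Real.exp uk * rk) (Lki ri rj rk Iij Ijk Iki ui uj uk)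

/-- The height `h_ij^k`. -/
noncomputable def Hijk (ri rj rk Iij Ijk Iki ui uj uk : ℝ) : ℝ :=
  hgt (Dik ri rj rk Iij Ijk Iki ui uj uk) (Dij ri rj rk Iij Ijk Iki ui uj uk)
    (ThI ri rj rk Iij Ijk Iki ui uj uk)

/-- The height `h_ik^j`. -/
noncomputable def Hikj (ri rj rk Iij Ijk Iki ui uj uk : ℝ) : ℝ :=
  hgt (Dij ri rj rk Iij Ijk Iki ui uj uk) (Dik ri rj rk Iij Ijk Iki ui uj uk)
    (ThI ri rj rk Iij Ijk Iki ui uj uk)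

/-- The height `h_jk^i`. -/
noncomputable def Hjki (ri rj rk Iij Ijk Iki ui uj uk : ℝ) : ℝ :=
  hgt (Dji ri rj rk Iij Ijk Iki ui uj uk) (Djk ri rj rk Iij Ijk Iki ui uj uk)
    (ThJ ri rj rk Iij Ijk Iki ui uj uk)

/-- The height `h_ki^j`. -/
noncomputable def Hkij (ri rj rk Iij Ijk Iki ui uj uk : ℝ) : ℝ :=
  hgt (Dkj ri rj rk Iij Ijk Iki ui uj uk) (Dki ri rj rk Iij Ijk Iki ui uj uk)
    (ThK ri rj rk Iij Ijk Iki ui uj uk)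

/-- The area `A_ijk = (1/2) l_ij l_jk sin θ_ki^j`. -/
noncomputable def Area (ri rj rk Iij Ijk Iki ui uj uk : ℝ) : ℝ :=
  (1 / 2) * Lij ri rj rk Iij Ijk Iki ui uj uk * Ljk ri rj rk Iij Ijk Iki ui uj uk *
    Real.sin (ThJ ri rj rk Iij Ijk Iki ui uj uk)

/-- Nondegeneracy of the decorated triangle at `u`. -/
def NondegT (ri rj rk Iij Ijk Iki ui uj uk : ℝ) : Prop :=
  Nondeg (Lij ri rj rk Iij Ijk Iki ui uj uk) (Ljk ri rj rk Iij Ijk Iki ui uj uk)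
    (Lki ri rj rk Iij Ijk Iki ui uj uk)

/-!
By Heron's formula `A = √(4 a² c² - (a² + c² - b²)²) / 4` in the sides `a = l_ij`, `b = l_jk`,
`c = l_ki`, and only `a` and `c` depend on `u_i`, with `∂a/∂u_i = d_ij` and `∂c/∂u_i = d_ik`
(differentiate `l² = r_i² + r_j² + 2 I r_i r_j`). The chain rule and the law of cosines at
the vertex `i` then turn `∂A/∂u_i` into `(a (d_ik - d_ij cos θ) + c (d_ij - d_ik cos θ)) / (2 sin θ)`.
-/

lemma Nondeg.pos {a b c : ℝ} (h : Nondeg a b c) : 0 < a ∧ 0 < b ∧ 0 < c := by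
  obtain ⟨h₁, h₂, h₃⟩ := h
  exact ⟨by linarith, by linarith, by linarith⟩

lemma Nondeg.swap {a b c : ℝ} (h : Nondeg a b c) : Nondeg a c b := by
  obtain ⟨h₁, h₂, h₃⟩ := h
  exact ⟨by linarith, by linarith, by linarith⟩

lemma heron_pos {a b c : ℝ} (h : Nondeg a b c) :
    0 < 4 * a ^ 2 * b ^ 2 - (a ^ 2 + b ^ 2 - c ^ 2) ^ 2 := by
  obtain ⟨h₁, h₂, h₃⟩ := h
  nlinarith [mul_pos (mul_pos (sub_pos.2 h₁) (sub_pos.2 h₂))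
    (mul_pos (sub_pos.2 h₃) (show 0 < a + b + c by linarith))]

lemma cos_ang {a b c : ℝ} (h : Nondeg a b c) :
    cos (ang a b c) = (a ^ 2 + b ^ 2 - c ^ 2) / (2 * a * b) := by
  obtain ⟨ha, hb, -⟩ := h.pos
  obtain ⟨h₁, h₂, h₃⟩ := h
  have hab : 0 < 2 * a * b := by positivity
  refine cos_arccos ?_ ?_
  · rw [le_div_iff₀ hab]
    nlinarith [mul_pos (show 0 < a + b - c by linarith) (show 0 < a + b + c by linarith)]
  · rw [div_le_one hab]
    nlinarith [mul_pos (show 0 < c + a - b by linarith) (show 0 < c - a + b by linarith)]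

lemma sin_ang {a b c : ℝ} (ha : 0 < a) (hb : 0 < b) :
    sin (ang a b c) = √(4 * a ^ 2 * b ^ 2 - (a ^ 2 + b ^ 2 - c ^ 2) ^ 2) / (2 * a * b) := by
  have hab : 0 < 2 * a * b := by positivity
  have hQ : 4 * a ^ 2 * b ^ 2 - (a ^ 2 + b ^ 2 - c ^ 2) ^ 2 =
      (2 * a * b) ^ 2 * (1 - ((a ^ 2 + b ^ 2 - c ^ 2) / (2 * a * b)) ^ 2) := by
    field_simp
    ring
  rw [ang, sin_arccos, hQ, sqrt_mul (sq_nonneg _), sqrt_sq hab.le, mul_div_cancel_left₀ _ hab.ne']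

lemma half_mul_mul_sin_ang {a b c : ℝ} (ha : 0 < a) (hb : 0 < b) :
    1 / 2 * a * b * sin (ang a b c) = √(4 * a ^ 2 * b ^ 2 - (a ^ 2 + b ^ 2 - c ^ 2) ^ 2) / 4 := by
  rw [sin_ang ha hb]
  field_simp
  ring

theorem hasDerivAt_half_mul_mul_sin_ang {a c : ℝ → ℝ} {a' c' b t : ℝ}
    (ha : HasDerivAt a a' t) (hc : HasDerivAt c c' t) (hnd : Nondeg (a t) b (c t)) :
    HasDerivAt (fun s => 1 / 2 * a s * b * sin (ang (a s) b (c s)))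
      (1 / 2 * a t * hgt c' a' (ang (a t) (c t) b) +
        1 / 2 * c t * hgt a' c' (ang (a t) (c t) b)) t := by
  obtain ⟨ha₀, hb₀, hc₀⟩ := hnd.pos
  set Q : ℝ → ℝ := fun s => 4 * a s ^ 2 * b ^ 2 - (a s ^ 2 + b ^ 2 - c s ^ 2) ^ 2
  have hQ : HasDerivAt Q (4 * (2 * a t * a') * b ^ 2 -
      2 * (a t ^ 2 + b ^ 2 - c t ^ 2) * (2 * a t * a' - 2 * c t * c')) t := by
    refine ((((ha.fun_pow 2).const_mul 4).mul_const (b ^ 2)).fun_sub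
      ((((ha.fun_pow 2).add_const (b ^ 2)).fun_sub (hc.fun_pow 2)).fun_pow 2)).congr_deriv ?_
    push_cast
    ring
  have hQt : 0 < Q t := heron_pos hnd
  have hArea : (fun s => 1 / 2 * a s * b * sin (ang (a s) b (c s))) =ᶠ[𝓝 t]
      fun s => √(Q s) / 4 := by
    filter_upwards [continuousAt_const.eventually_lt ha.continuousAt ha₀] with s hs
    exact half_mul_mul_sin_ang hs hb₀
  refine (((hQ.sqrt hQt.ne').div_const 4).congr_of_eventuallyEq hArea).congr_deriv ?_
  have hsin : sin (ang (a t) (c t) b) = √(Q t) / (2 * a t * c t) := by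
    rw [sin_ang ha₀ hc₀]
    congr 2
    ring
  have hs : 0 < √(Q t) := sqrt_pos.2 hQt
  rw [hgt, hgt, hsin, cos_ang hnd.swap]
  field_simp
  ring

lemma elen_comm (I ra rb x y : ℝ) : elen I ra rb x y = elen I rb ra y x := by
  unfold elen
  ring_nf

lemma hasDerivAt_elen_left {I ra rb x y : ℝ} (h : elen I ra rb x y ≠ 0) :
    HasDerivAt (fun t => elen I ra rb t y)
      (dCen I (exp x * ra) (exp y * rb) (elen I ra rb x y)) x := by
  have hS : (exp x * ra) ^ 2 + (exp y * rb) ^ 2 + 2 * I * (exp x * ra) * (exp y * rb) ≠ 0 :=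
    fun h₀ => h (by rw [elen, h₀, sqrt_zero])
  have hX : HasDerivAt (fun t => exp t * ra) (exp x * ra) x := (hasDerivAt_exp x).mul_const ra
  refine ((((hX.fun_pow 2).add_const _).fun_add
    ((hX.const_mul (2 * I)).mul_const _)).sqrt hS).congr_deriv ?_
  unfold elen at h
  rw [dCen, elen]
  field_simp
  ring

lemma hasDerivAt_elen_right {I ra rb x y : ℝ} (h : elen I ra rb x y ≠ 0) :
    HasDerivAt (fun t => elen I ra rb x t)
      (dCen I (exp y * rb) (exp x * ra) (elen I ra rb x y)) y := by
  simp only [elen_comm I ra rb x] at h ⊢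
  exact hasDerivAt_elen_left h

theorem hasDerivAt_area_general (ri rj rk Iij Ijk Iki : ℝ)
    (ui uj uk : ℝ) (hnd : NondegT ri rj rk Iij Ijk Iki ui uj uk) :
    HasDerivAt (fun t => Area ri rj rk Iij Ijk Iki t uj uk)
      ((1 / 2) * Lij ri rj rk Iij Ijk Iki ui uj uk * Hijk ri rj rk Iij Ijk Iki ui uj uk +
        (1 / 2) * Lki ri rj rk Iij Ijk Iki ui uj uk * Hikj ri rj rk Iij Ijk Iki ui uj uk) ui := by
  obtain ⟨hij, -, hki⟩ := Nondeg.pos hnd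
  exact hasDerivAt_half_mul_mul_sin_ang (hasDerivAt_elen_left hij.ne')
    (hasDerivAt_elen_right hki.ne') hnd

/-- `∂ A_ijk / ∂ u_i = (1/2) l_ij h_ij^k + (1/2) l_ki h_ik^j`. -/
theorem hasDerivAt_area (ri rj rk Iij Ijk Iki : ℝ) (hri : 0 < ri) (hrj : 0 < rj) (hrk : 0 < rk)
    (hIij : 1 < Iij) (hIjk : 1 < Ijk) (hIki : 1 < Iki)
    (ui uj uk : ℝ) (hnd : NondegT ri rj rk Iij Ijk Iki ui uj uk) :
    HasDerivAt (fun t => Area ri rj rk Iij Ijk Iki t uj uk)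
      ((1 / 2) * Lij ri rj rk Iij Ijk Iki ui uj uk * Hijk ri rj rk Iij Ijk Iki ui uj uk +
        (1 / 2) * Lki ri rj rk Iij Ijk Iki ui uj uk * Hikj ri rj rk Iij Ijk Iki ui uj uk) ui :=
  hasDerivAt_area_general ri rj rk Iij Ijk Iki ui uj uk hnd
end

section
/- For every nondegenerate u ∈ ℝ³ and every c ∈ ℝ, the point u + c(1,1,1) is nondegenerate and F(u + c(1,1,1)) = F(u) + cπ. -/
open Real Filter Topology

/-- The inverse hyperbolic cosine, `arcosh x = log (x + sqrt (x^2 - 1))`. -/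
noncomputable def arcosh (x : ℝ) : ℝ := Real.log (x + Real.sqrt (x ^ 2 - 1))

/-- Milnor's Lobachevsky function. -/
noncomputable def Lob (x : ℝ) : ℝ := -∫ t in (0:ℝ)..x, Real.log |2 * Real.sin t|

/-- Radius of the face circle: `r_ijk = sqrt(d_jk^2 + (h_jk^i)^2 - r_j(u)^2)`. -/
noncomputable def RC (ri rj rk Iij Ijk Iki ui uj uk : ℝ) : ℝ :=
  Real.sqrt (Djk ri rj rk Iij Ijk Iki ui uj uk ^ 2 + Hjki ri rj rk Iij Ijk Iki ui uj uk ^ 2 - (Real.exp uj * rj) ^ 2)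

/-- Intersection angle `α_jk^i`. -/
noncomputable def AlJK (ri rj rk Iij Ijk Iki ui uj uk : ℝ) : ℝ :=
  Real.arccos (Hjki ri rj rk Iij Ijk Iki ui uj uk / RC ri rj rk Iij Ijk Iki ui uj uk)

/-- Intersection angle `α_ki^j`. -/
noncomputable def AlKI (ri rj rk Iij Ijk Iki ui uj uk : ℝ) : ℝ :=
  Real.arccos (Hkij ri rj rk Iij Ijk Iki ui uj uk / RC ri rj rk Iij Ijk Iki ui uj uk)

/-- Intersection angle `α_ij^k`. -/
noncomputable def AlIJ (ri rj rk Iij Ijk Iki ui uj uk : ℝ) : ℝ :=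
  Real.arccos (Hijk ri rj rk Iij Ijk Iki ui uj uk / RC ri rj rk Iij Ijk Iki ui uj uk)

/-- Twice the truncated volume of the associated generalized hyperbolic tetrahedron. -/
noncomputable def Vol2 (ri rj rk Iij Ijk Iki ui uj uk : ℝ) : ℝ :=
  Lob (ThI ri rj rk Iij Ijk Iki ui uj uk) + Lob (ThJ ri rj rk Iij Ijk Iki ui uj uk) + Lob (ThK ri rj rk Iij Ijk Iki ui uj uk) +
  Lob ((π + AlKI ri rj rk Iij Ijk Iki ui uj uk + AlIJ ri rj rk Iij Ijk Iki ui uj uk - ThI ri rj rk Iij Ijk Iki ui uj uk) / 2) +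
  Lob ((π + AlKI ri rj rk Iij Ijk Iki ui uj uk - AlIJ ri rj rk Iij Ijk Iki ui uj uk - ThI ri rj rk Iij Ijk Iki ui uj uk) / 2) +
  Lob ((π - AlKI ri rj rk Iij Ijk Iki ui uj uk + AlIJ ri rj rk Iij Ijk Iki ui uj uk - ThI ri rj rk Iij Ijk Iki ui uj uk) / 2) +
  Lob ((π - AlKI ri rj rk Iij Ijk Iki ui uj uk - AlIJ ri rj rk Iij Ijk Iki ui uj uk - ThI ri rj rk Iij Ijk Iki ui uj uk) / 2) +
  Lob ((π + AlJK ri rj rk Iij Ijk Iki ui uj uk + AlIJ ri rj rk Iij Ijk Iki ui uj uk - ThJ ri rj rk Iij Ijk Iki ui uj uk) / 2) +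
  Lob ((π + AlJK ri rj rk Iij Ijk Iki ui uj uk - AlIJ ri rj rk Iij Ijk Iki ui uj uk - ThJ ri rj rk Iij Ijk Iki ui uj uk) / 2) +
  Lob ((π - AlJK ri rj rk Iij Ijk Iki ui uj uk + AlIJ ri rj rk Iij Ijk Iki ui uj uk - ThJ ri rj rk Iij Ijk Iki ui uj uk) / 2) +
  Lob ((π - AlJK ri rj rk Iij Ijk Iki ui uj uk - AlIJ ri rj rk Iij Ijk Iki ui uj uk - ThJ ri rj rk Iij Ijk Iki ui uj uk) / 2) +
  Lob ((π + AlJK ri rj rk Iij Ijk Iki ui uj uk + AlKI ri rj rk Iij Ijk Iki ui uj uk - ThK ri rj rk Iij Ijk Iki ui uj uk) / 2) +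
  Lob ((π + AlJK ri rj rk Iij Ijk Iki ui uj uk - AlKI ri rj rk Iij Ijk Iki ui uj uk - ThK ri rj rk Iij Ijk Iki ui uj uk) / 2) +
  Lob ((π - AlJK ri rj rk Iij Ijk Iki ui uj uk + AlKI ri rj rk Iij Ijk Iki ui uj uk - ThK ri rj rk Iij Ijk Iki ui uj uk) / 2) +
  Lob ((π - AlJK ri rj rk Iij Ijk Iki ui uj uk - AlKI ri rj rk Iij Ijk Iki ui uj uk - ThK ri rj rk Iij Ijk Iki ui uj uk) / 2)

/-- The function `F_ijk`. -/
noncomputable def Ffun (ri rj rk Iij Ijk Iki ui uj uk : ℝ) : ℝ :=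
  -Vol2 ri rj rk Iij Ijk Iki ui uj uk + ThI ri rj rk Iij Ijk Iki ui uj uk * ui + ThJ ri rj rk Iij Ijk Iki ui uj uk * uj + ThK ri rj rk Iij Ijk Iki ui uj uk * uk +
    (π / 2 - AlIJ ri rj rk Iij Ijk Iki ui uj uk) * _root_.arcosh Iij + (π / 2 - AlKI ri rj rk Iij Ijk Iki ui uj uk) * _root_.arcosh Iki +
    (π / 2 - AlJK ri rj rk Iij Ijk Iki ui uj uk) * _root_.arcosh Ijk


section AuxLemmas

lemma angle_eq_ang' {V : Type*} [NormedAddCommGroup V] [InnerProductSpace ℝ V] (x y : V) :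
    InnerProductGeometry.angle x y = ang ‖x‖ ‖y‖ ‖x - y‖ := by
  rw [InnerProductGeometry.angle, ang]
  congr 1
  have h : ‖x - y‖ ^ 2 = ‖x‖ ^ 2 - 2 * (inner ℝ x y : ℝ) + ‖y‖ ^ 2 := norm_sub_sq_real x y
  have h2 : ‖x‖ ^ 2 + ‖y‖ ^ 2 - ‖x - y‖ ^ 2 = 2 * (inner ℝ x y : ℝ) := by linarith
  rw [h2, show (2:ℝ) * ‖x‖ * ‖y‖ = 2 * (‖x‖ * ‖y‖) by ring,
    mul_div_mul_left _ _ (two_ne_zero)]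

lemma ang_sum' {a b c : ℝ} (ha : 0 < a) (hb : 0 < b) (hc : 0 < c)
    (h1 : a < b + c) (h2 : b < c + a) (h3 : c < a + b) :
    ang c b a + ang c a b + ang a b c = π := by
  set p : ℝ := (c ^ 2 + b ^ 2 - a ^ 2) / (2 * c) with hp_def
  have hp : 2 * c * p = c ^ 2 + b ^ 2 - a ^ 2 := by
    rw [hp_def]; field_simp
  have hprod : 0 < (b + c - a) * (c + a - b) * (a + b - c) * (a + b + c) := by
    have hA : 0 < b + c - a := by linarith
    have hB : 0 < c + a - b := by linarith
    have hC : 0 < a + b - c := by linarith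
    have hD : 0 < a + b + c := by linarith
    exact mul_pos (mul_pos (mul_pos hA hB) hC) hD
  have hbp : 0 < b ^ 2 - p ^ 2 := by
    nlinarith [sq_nonneg c, hprod, hp, mul_pos hc hc]
  set q : ℝ := Real.sqrt (b ^ 2 - p ^ 2) with hq_def
  have hq : q ^ 2 = b ^ 2 - p ^ 2 := Real.sq_sqrt hbp.le
  have hqpos : 0 < q := Real.sqrt_pos.mpr hbp
  set x : ℂ := (c : ℂ) with hx_def
  set y : ℂ := ⟨p, q⟩ with hy_def
  have hxnorm : ‖x‖ = c := by
    simp [hx_def, Complex.norm_real, abs_of_pos hc]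
  have hynorm : ‖y‖ = b := by
    rw [Complex.norm_def, Complex.normSq_apply]
    simp only [hy_def]
    rw [show p * p + q * q = b ^ 2 by nlinarith [hq]]
    exact Real.sqrt_sq hb.le
  have hxy : ‖x - y‖ = a := by
    rw [Complex.norm_def, Complex.normSq_apply]
    have hre : (x - y).re = c - p := by simp [hx_def, hy_def]
    have him : (x - y).im = -q := by simp [hx_def, hy_def]
    rw [hre, him,
      show (c - p) * (c - p) + -q * -q = a ^ 2 by nlinarith [hq, hp]]
    exact Real.sqrt_sq ha.le
  have hyx : ‖y - x‖ = a := by rw [← norm_neg]; simpa [neg_sub] using hxy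
  have hx0 : x ≠ 0 := by
    simp only [hx_def]; exact_mod_cast hc.ne'
  have hy0 : y ≠ 0 := by
    intro hy0
    rw [hy_def] at hy0
    have : q = 0 := by
      have := congrArg Complex.im hy0; simpa using this
    exact hqpos.ne' this
  have key := InnerProductGeometry.angle_add_angle_sub_add_angle_sub_eq_pi x hy0
  rw [angle_eq_ang' x y, angle_eq_ang' x (x - y), angle_eq_ang' y (y - x)] at key
  rw [show x - (x - y) = y by ring, show y - (y - x) = x by ring] at key
  rw [hxnorm, hynorm, hxy, hyx] at key
  have hsymm : ang b a c = ang a b c := by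
    rw [ang, ang]; ring_nf
  linarith [key, hsymm ▸ key]

lemma elen_shift' (I ra rb x y cc : ℝ) :
    elen I ra rb (x + cc) (y + cc) = Real.exp cc * elen I ra rb x y := by
  unfold elen
  rw [Real.exp_add, Real.exp_add]
  rw [show (Real.exp x * Real.exp cc * ra) ^ 2 + (Real.exp y * Real.exp cc * rb) ^ 2 +
      2 * I * (Real.exp x * Real.exp cc * ra) * (Real.exp y * Real.exp cc * rb)
      = (Real.exp cc) ^ 2 * ((Real.exp x * ra) ^ 2 + (Real.exp y * rb) ^ 2 +
        2 * I * (Real.exp x * ra) * (Real.exp y * rb)) from by ring,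
    Real.sqrt_mul (sq_nonneg _), Real.sqrt_sq (Real.exp_nonneg cc)]

lemma elen_pos' {I ra rb : ℝ} (hI : 0 < I) (hra : 0 < ra) (hrb : 0 < rb) (x y : ℝ) :
    0 < elen I ra rb x y := by
  have hA : 0 < Real.exp x * ra := by positivity
  have hB : 0 < Real.exp y * rb := by positivity
  apply Real.sqrt_pos.mpr
  nlinarith [mul_pos (mul_pos hI hA) hB, sq_nonneg (Real.exp x * ra), sq_nonneg (Real.exp y * rb)]

lemma ang_scale' {t : ℝ} (ht : 0 < t) (la lb lc : ℝ) :
    ang (t * la) (t * lb) (t * lc) = ang la lb lc := by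
  rw [ang, ang]
  congr 1
  rw [show (t * la) ^ 2 + (t * lb) ^ 2 - (t * lc) ^ 2
      = t ^ 2 * (la ^ 2 + lb ^ 2 - lc ^ 2) from by ring,
    show 2 * (t * la) * (t * lb) = t ^ 2 * (2 * la * lb) from by ring,
    mul_div_mul_left _ _ (pow_ne_zero 2 ht.ne')]

lemma dCen_scale' {t : ℝ} (ht : t ≠ 0) (I ra rb l : ℝ) :
    dCen I (t * ra) (t * rb) (t * l) = t * dCen I ra rb l := by
  rw [dCen, dCen,
    show (t * ra) ^ 2 + I * (t * ra) * (t * rb) = t * (t * (ra ^ 2 + I * ra * rb)) from by ring,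
    mul_div_mul_left _ _ ht, mul_div_assoc]

lemma hgt_scale' (t dac dab th : ℝ) :
    hgt (t * dac) (t * dab) th = t * hgt dac dab th := by
  rw [hgt, hgt,
    show t * dac - t * dab * Real.cos th = t * (dac - dab * Real.cos th) from by ring,
    mul_div_assoc]

lemma sqrt_scale' {t : ℝ} (ht : 0 ≤ t) (A B C : ℝ) :
    Real.sqrt ((t * A) ^ 2 + (t * B) ^ 2 - (t * C) ^ 2)
      = t * Real.sqrt (A ^ 2 + B ^ 2 - C ^ 2) := by
  rw [show (t * A) ^ 2 + (t * B) ^ 2 - (t * C) ^ 2 = t ^ 2 * (A ^ 2 + B ^ 2 - C ^ 2) from by ring,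
    Real.sqrt_mul (sq_nonneg t), Real.sqrt_sq ht]

end AuxLemmas

/-- `F(u + c(1,1,1)) = F(u) + c π` for nondegenerate `u`. -/
theorem Ffun_translation (ri rj rk Iij Ijk Iki : ℝ) (hri : 0 < ri) (hrj : 0 < rj) (hrk : 0 < rk)
    (hIij : 1 < Iij) (hIjk : 1 < Ijk) (hIki : 1 < Iki)
    (ui uj uk cc : ℝ) (hnd : NondegT ri rj rk Iij Ijk Iki ui uj uk) :
    NondegT ri rj rk Iij Ijk Iki (ui + cc) (uj + cc) (uk + cc) ∧
    Ffun ri rj rk Iij Ijk Iki (ui + cc) (uj + cc) (uk + cc) = Ffun ri rj rk Iij Ijk Iki ui uj uk + cc * π := by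
  obtain ⟨n1, n2, n3⟩ := hnd
  set t : ℝ := Real.exp cc with ht_def
  have ht : 0 < t := Real.exp_pos cc
  have hLij : Lij ri rj rk Iij Ijk Iki (ui + cc) (uj + cc) (uk + cc)
      = t * Lij ri rj rk Iij Ijk Iki ui uj uk := elen_shift' Iij ri rj ui uj cc
  have hLjk : Ljk ri rj rk Iij Ijk Iki (ui + cc) (uj + cc) (uk + cc)
      = t * Ljk ri rj rk Iij Ijk Iki ui uj uk := elen_shift' Ijk rj rk uj uk cc
  have hLki : Lki ri rj rk Iij Ijk Iki (ui + cc) (uj + cc) (uk + cc)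
      = t * Lki ri rj rk Iij Ijk Iki ui uj uk := elen_shift' Iki rk ri uk ui cc
  have hIij0 : (0:ℝ) < Iij := lt_trans one_pos hIij
  have hIjk0 : (0:ℝ) < Ijk := lt_trans one_pos hIjk
  have hIki0 : (0:ℝ) < Iki := lt_trans one_pos hIki
  have hpij : 0 < Lij ri rj rk Iij Ijk Iki ui uj uk := elen_pos' hIij0 hri hrj ui uj
  have hpjk : 0 < Ljk ri rj rk Iij Ijk Iki ui uj uk := elen_pos' hIjk0 hrj hrk uj uk
  have hpki : 0 < Lki ri rj rk Iij Ijk Iki ui uj uk := elen_pos' hIki0 hrk hri uk ui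
  have hnd' : NondegT ri rj rk Iij Ijk Iki (ui + cc) (uj + cc) (uk + cc) := by
    refine ⟨?_, ?_, ?_⟩ <;> rw [hLij, hLjk, hLki] <;> nlinarith [ht]
  have hei : Real.exp (ui + cc) * ri = t * (Real.exp ui * ri) := by
    rw [Real.exp_add]; ring
  have hej : Real.exp (uj + cc) * rj = t * (Real.exp uj * rj) := by
    rw [Real.exp_add]; ring
  have hek : Real.exp (uk + cc) * rk = t * (Real.exp uk * rk) := by
    rw [Real.exp_add]; ring
  have hThI : ThI ri rj rk Iij Ijk Iki (ui + cc) (uj + cc) (uk + cc)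
      = ThI ri rj rk Iij Ijk Iki ui uj uk := by
    simp only [ThI]; rw [hLij, hLki, hLjk]; exact ang_scale' ht _ _ _
  have hThJ : ThJ ri rj rk Iij Ijk Iki (ui + cc) (uj + cc) (uk + cc)
      = ThJ ri rj rk Iij Ijk Iki ui uj uk := by
    simp only [ThJ]; rw [hLij, hLki, hLjk]; exact ang_scale' ht _ _ _
  have hThK : ThK ri rj rk Iij Ijk Iki (ui + cc) (uj + cc) (uk + cc)
      = ThK ri rj rk Iij Ijk Iki ui uj uk := by
    simp only [ThK]; rw [hLij, hLki, hLjk]; exact ang_scale' ht _ _ _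
  have hDij : Dij ri rj rk Iij Ijk Iki (ui + cc) (uj + cc) (uk + cc)
      = t * Dij ri rj rk Iij Ijk Iki ui uj uk := by
    simp only [Dij]; rw [hei, hej, hLij]; exact dCen_scale' ht.ne' _ _ _ _
  have hDji : Dji ri rj rk Iij Ijk Iki (ui + cc) (uj + cc) (uk + cc)
      = t * Dji ri rj rk Iij Ijk Iki ui uj uk := by
    simp only [Dji]; rw [hei, hej, hLij]; exact dCen_scale' ht.ne' _ _ _ _
  have hDjk : Djk ri rj rk Iij Ijk Iki (ui + cc) (uj + cc) (uk + cc)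
      = t * Djk ri rj rk Iij Ijk Iki ui uj uk := by
    simp only [Djk]; rw [hej, hek, hLjk]; exact dCen_scale' ht.ne' _ _ _ _
  have hDkj : Dkj ri rj rk Iij Ijk Iki (ui + cc) (uj + cc) (uk + cc)
      = t * Dkj ri rj rk Iij Ijk Iki ui uj uk := by
    simp only [Dkj]; rw [hej, hek, hLjk]; exact dCen_scale' ht.ne' _ _ _ _
  have hDki : Dki ri rj rk Iij Ijk Iki (ui + cc) (uj + cc) (uk + cc)
      = t * Dki ri rj rk Iij Ijk Iki ui uj uk := by
    simp only [Dki]; rw [hei, hek, hLki]; exact dCen_scale' ht.ne' _ _ _ _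
  have hDik : Dik ri rj rk Iij Ijk Iki (ui + cc) (uj + cc) (uk + cc)
      = t * Dik ri rj rk Iij Ijk Iki ui uj uk := by
    simp only [Dik]; rw [hei, hek, hLki]; exact dCen_scale' ht.ne' _ _ _ _
  have hHijk : Hijk ri rj rk Iij Ijk Iki (ui + cc) (uj + cc) (uk + cc)
      = t * Hijk ri rj rk Iij Ijk Iki ui uj uk := by
    simp only [Hijk]; rw [hDik, hDij, hThI]; exact hgt_scale' _ _ _ _
  have hHjki : Hjki ri rj rk Iij Ijk Iki (ui + cc) (uj + cc) (uk + cc)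
      = t * Hjki ri rj rk Iij Ijk Iki ui uj uk := by
    simp only [Hjki]; rw [hDji, hDjk, hThJ]; exact hgt_scale' _ _ _ _
  have hHkij : Hkij ri rj rk Iij Ijk Iki (ui + cc) (uj + cc) (uk + cc)
      = t * Hkij ri rj rk Iij Ijk Iki ui uj uk := by
    simp only [Hkij]; rw [hDkj, hDki, hThK]; exact hgt_scale' _ _ _ _
  have hRC : RC ri rj rk Iij Ijk Iki (ui + cc) (uj + cc) (uk + cc)
      = t * RC ri rj rk Iij Ijk Iki ui uj uk := by
    simp only [RC]; rw [hDjk, hHjki, hej]; exact sqrt_scale' ht.le _ _ _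
  have hAlJK : AlJK ri rj rk Iij Ijk Iki (ui + cc) (uj + cc) (uk + cc)
      = AlJK ri rj rk Iij Ijk Iki ui uj uk := by
    simp only [AlJK]; rw [hHjki, hRC, mul_div_mul_left _ _ ht.ne']
  have hAlKI : AlKI ri rj rk Iij Ijk Iki (ui + cc) (uj + cc) (uk + cc)
      = AlKI ri rj rk Iij Ijk Iki ui uj uk := by
    simp only [AlKI]; rw [hHkij, hRC, mul_div_mul_left _ _ ht.ne']
  have hAlIJ : AlIJ ri rj rk Iij Ijk Iki (ui + cc) (uj + cc) (uk + cc)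
      = AlIJ ri rj rk Iij Ijk Iki ui uj uk := by
    simp only [AlIJ]; rw [hHijk, hRC, mul_div_mul_left _ _ ht.ne']
  have hVol2 : Vol2 ri rj rk Iij Ijk Iki (ui + cc) (uj + cc) (uk + cc)
      = Vol2 ri rj rk Iij Ijk Iki ui uj uk := by
    simp only [Vol2]; rw [hThI, hThJ, hThK, hAlJK, hAlKI, hAlIJ]
  have hsum : ThI ri rj rk Iij Ijk Iki ui uj uk + ThJ ri rj rk Iij Ijk Iki ui uj uk
      + ThK ri rj rk Iij Ijk Iki ui uj uk = π := by
    simp only [ThI, ThJ, ThK]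
    exact ang_sum' hpjk hpki hpij n2 n3 n1
  refine ⟨hnd', ?_⟩
  simp only [Ffun]
  rw [hVol2, hThI, hThJ, hThK, hAlJK, hAlKI, hAlIJ]
  linear_combination cc * hsum
end
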